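/- arXiv:2112.00526 — 2 statements merged into one kernel-verified Lean document; each statement's English description precedes it below -/
import Mathlib

section
/- For every topological space M and every homeomorphism f : M → M, the induced map p : M_f → ℝ/ℤ is well defined, continuous, and locally trivial with fiber M: every point θ ∈ ℝ/ℤ has an open neighborhood W together with a homeomorphism Φ : p⁻¹(W) → W × M such that the first component of Φ agrees with p. In particular M_f is a fiber bundle over the circle with fiber M. -/
/-- The orbit relation on `M × ℝ` of the ℤ-action `n • (x, s) = (fⁿ x, s - n)`.
The mapping torus `M_f` is the quotient `Quot (mtRel f)`. -/
def mtRel {M : Type*} [TopologicalSpace M] (f : M ≃ₜ M) (p q : M × ℝ) : Prop :=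
  ∃ n : ℤ, ((f.toEquiv ^ n) p.1, p.2 - (n : ℝ)) = q

/-!
The quotient map `M × ℝ → M_f` is open, since `M_f` is the orbit space of a group acting by
homeomorphisms. Over an open interval `S ⊆ ℝ` on which `ℝ → ℝ/ℤ` is injective, every orbit lying
over the arc `W = S mod 1` meets the slab `M × S` in exactly one point, so the quotient map
restricts to a homeomorphism `M × S ≃ₜ p⁻¹(W)`; composing with `S ≃ₜ W` trivializes `p` over `W`.
-/

open Set Topology

theorem Homeomorph.toEquiv_zpow {X : Type*} [TopologicalSpace X] (f : X ≃ₜ X) (n : ℤ) :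
    (f ^ n).toEquiv = f.toEquiv ^ n :=
  map_zpow (MonoidHom.mk' (Homeomorph.toEquiv : (X ≃ₜ X) → Equiv.Perm X) fun _ _ => rfl) f n

noncomputable def Set.InjOn.homeomorphImage {X Y : Type*} [TopologicalSpace X]
    [TopologicalSpace Y] {g : X → Y} {S : Set X} (hinj : S.InjOn g) (hc : Continuous g)
    (ho : IsOpenMap g) (hS : IsOpen S) : S ≃ₜ g '' S :=
  (IsOpenEmbedding.of_continuous_injective_isOpenMap (hc.comp continuous_subtype_val)
    (injOn_iff_injective.mp hinj) (ho.domRestrict hS)).toIsEmbedding.toHomeomorph.trans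
    (Homeomorph.setCongr (range_domRestrict g S))

theorem AddCircle.injOn_coe_Ioo {𝕜 : Type*} [AddCommGroup 𝕜] [LinearOrder 𝕜]
    [IsOrderedAddMonoid 𝕜] [Archimedean 𝕜] {p : 𝕜} [Fact (0 < p)] (a : 𝕜) :
    (Ioo a (a + p)).InjOn ((↑) : 𝕜 → AddCircle p) := fun _ hx _ hy =>
  (coe_eq_coe_iff_of_mem_Ico (Ioo_subset_Ico_self hx) (Ioo_subset_Ico_self hy)).mp

namespace MappingTorus

variable {M : Type*} [TopologicalSpace M] (f : M ≃ₜ M)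

def shift (n : ℤ) : M × ℝ ≃ₜ M × ℝ :=
  (f ^ n).prodCongr (Homeomorph.subRight (n : ℝ))

variable {f}

theorem mtRel_iff_exists_shift {a b : M × ℝ} : mtRel f a b ↔ ∃ n : ℤ, shift f n a = b := by
  simp only [mtRel, shift, ← Homeomorph.toEquiv_zpow]
  rfl

theorem shift_zero_apply (a : M × ℝ) : shift f 0 a = a := by
  ext <;> simp [shift]

theorem shift_add_apply (m n : ℤ) (a : M × ℝ) : shift f (m + n) a = shift f m (shift f n a) := by
  ext
  · simp [shift, zpow_add]
  · change a.2 - ((m + n : ℤ) : ℝ) = a.2 - n - m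
    push_cast; ring

variable (f)

theorem mtRel_equivalence : Equivalence (mtRel f) where
  refl a := mtRel_iff_exists_shift.mpr ⟨0, shift_zero_apply a⟩
  symm := by
    simp only [mtRel_iff_exists_shift]
    rintro a _ ⟨n, rfl⟩
    exact ⟨-n, by rw [← shift_add_apply, neg_add_cancel, shift_zero_apply]⟩
  trans := by
    simp only [mtRel_iff_exists_shift]
    rintro a _ _ ⟨n, rfl⟩ ⟨m, rfl⟩
    exact ⟨m + n, shift_add_apply m n a⟩

theorem mk_eq_mk_iff {a b : M × ℝ} :
    Quot.mk (mtRel f) a = Quot.mk (mtRel f) b ↔ ∃ n : ℤ, shift f n a = b :=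
  (Quot.eq.trans (mtRel_equivalence f).eqvGen_iff).trans mtRel_iff_exists_shift

theorem isOpenMap_mk : IsOpenMap (Quot.mk (mtRel f)) := by
  intro U hU
  have h : Quot.mk (mtRel f) ⁻¹' (Quot.mk (mtRel f) '' U) = ⋃ n : ℤ, shift f n '' U := by
    ext z
    simp only [mem_preimage, mem_image, mem_iUnion, mk_eq_mk_iff]
    grind
  rw [isOpen_coinduced, h]
  exact isOpen_iUnion fun n => (shift f n).isOpenMap U hU

def proj : Quot (mtRel f) → AddCircle (1 : ℝ) :=
  Quot.lift (fun a => (a.2 : AddCircle (1 : ℝ))) <| by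
    rintro a _ ⟨n, rfl⟩
    rw [AddCircle.coe_sub, eq_comm, sub_eq_self, AddCircle.coe_eq_zero_iff]
    exact ⟨n, by simp⟩

theorem continuous_proj : Continuous (proj f) :=
  continuous_quot_lift _ (continuous_quotient_mk'.comp continuous_snd)

variable {f}

theorem injOn_mk {S : Set ℝ} (hinj : S.InjOn ((↑) : ℝ → AddCircle (1 : ℝ))) :
    (univ ×ˢ S).InjOn (Quot.mk (mtRel f)) := by
  rintro a ⟨-, ha⟩ b ⟨-, hb⟩ hab
  have h2 : a.2 = b.2 := hinj ha hb (congrArg (proj f) hab)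
  obtain ⟨n, rfl⟩ := (mk_eq_mk_iff f).mp hab
  have hn : n = 0 := by
    change a.2 = a.2 - n at h2
    exact_mod_cast (sub_eq_self.mp h2.symm)
  rw [hn, shift_zero_apply]

theorem image_mk_univ_prod (S : Set ℝ) :
    Quot.mk (mtRel f) '' (univ ×ˢ S) = proj f ⁻¹' ((↑) '' S) := by
  ext z
  constructor
  · rintro ⟨a, ⟨-, ha⟩, rfl⟩
    exact ⟨a.2, ha, rfl⟩
  · rintro ⟨u, hu, hz⟩
    obtain ⟨⟨x, s⟩, rfl⟩ := Quot.exists_rep z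
    have hsu : ((s - u : ℝ) : AddCircle (1 : ℝ)) = 0 := by
      rw [AddCircle.coe_sub, sub_eq_zero]
      exact hz.symm
    obtain ⟨k, hk⟩ := (AddCircle.coe_eq_zero_iff 1).mp hsu
    have hku : s - k = u := by
      rw [← zsmul_one (R := ℝ) k, hk, sub_sub_cancel]
    refine ⟨shift f k (x, s), ⟨trivial, ?_⟩,
      (Quot.sound (mtRel_iff_exists_shift.mpr ⟨k, rfl⟩)).symm⟩
    change s - k ∈ S
    rwa [hku]

noncomputable def mkHomeomorph {S : Set ℝ} (hS : IsOpen S)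
    (hinj : S.InjOn ((↑) : ℝ → AddCircle (1 : ℝ))) :
    ↥(univ ×ˢ S : Set (M × ℝ)) ≃ₜ proj f ⁻¹' ((↑) '' S) :=
  ((injOn_mk hinj).homeomorphImage continuous_quot_mk (isOpenMap_mk f)
    (isOpen_univ.prod hS)).trans (Homeomorph.setCongr (image_mk_univ_prod S))

noncomputable def localTriv {S : Set ℝ} (hS : IsOpen S)
    (hinj : S.InjOn ((↑) : ℝ → AddCircle (1 : ℝ))) :
    proj f ⁻¹' ((↑) '' S) ≃ₜ ((↑) '' S : Set (AddCircle (1 : ℝ))) × M :=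
  (mkHomeomorph hS hinj).symm.trans <| (Homeomorph.Set.prod univ S).trans <|
    ((Homeomorph.Set.univ M).prodCongr
      (hinj.homeomorphImage continuous_quotient_mk' QuotientAddGroup.isOpenMap_coe hS)).trans
    (Homeomorph.prodComm M _)

theorem localTriv_fst {S : Set ℝ} (hS : IsOpen S)
    (hinj : S.InjOn ((↑) : ℝ → AddCircle (1 : ℝ))) (z : proj f ⁻¹' ((↑) '' S)) :
    ((localTriv hS hinj z).1 : AddCircle (1 : ℝ)) = proj f z := by
  obtain ⟨w, rfl⟩ := (mkHomeomorph (f := f) hS hinj).surjective z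
  simp only [localTriv, Homeomorph.trans_apply, Homeomorph.symm_apply_apply]
  rfl

end MappingTorus

open MappingTorus in
/-- The induced map `p : M_f → ℝ/ℤ` is well defined, continuous, and
locally trivial with fiber `M`: every `θ ∈ ℝ/ℤ` has an open neighborhood `W` and a
homeomorphism `Φ : p⁻¹(W) ≃ₜ W × M` whose first component agrees with `p`. -/
theorem mapping_torus_bundle_over_circle
    (M : Type*) [TopologicalSpace M] (f : M ≃ₜ M) :
    ∃ p : Quot (mtRel f) → AddCircle (1 : ℝ),
      (∀ (x : M) (s : ℝ), p (Quot.mk (mtRel f) (x, s)) = (s : AddCircle (1 : ℝ))) ∧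
      Continuous p ∧
      ∀ θ : AddCircle (1 : ℝ), ∃ W : Set (AddCircle (1 : ℝ)), IsOpen W ∧ θ ∈ W ∧
        ∃ Φ : (p ⁻¹' W) ≃ₜ W × M,
          ∀ z : p ⁻¹' W, ((Φ z).1 : AddCircle (1 : ℝ)) = p (z : Quot (mtRel f)) := by
  refine ⟨proj f, fun _ _ => rfl, continuous_proj f, fun θ => ?_⟩
  obtain ⟨t, rfl⟩ := QuotientAddGroup.mk_surjective θ
  have hS : IsOpen (Ioo (t - 1 / 2) (t - 1 / 2 + 1)) := isOpen_Ioo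
  have hinj := AddCircle.injOn_coe_Ioo (p := (1 : ℝ)) (t - 1 / 2)
  exact ⟨_, QuotientAddGroup.isOpenMap_coe _ hS,
    mem_image_of_mem _ ⟨by linarith, by linarith⟩, localTriv hS hinj, localTriv_fst hS hinj⟩
end

section
/- The image under the quotient map p of the punctured coordinate plane {(0, x₂, x₃) : (x₂, x₃) ≠ (0, 0)} ⊆ ℝ³ ∖ {0}, with its subspace topology in V, is homeomorphic to the 2-torus (ℝ/ℤ) × (ℝ/ℤ). (This image is the trivial torus λ̂₀ embedded in V ≅ S² × S¹.) -/
/-- Punctured Euclidean 3-space `ℝ³ ∖ {0}`. -/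
abbrev PuncturedR3 : Type := {x : EuclideanSpace ℝ (Fin 3) // x ≠ 0}

/-- The ℤ-action `n • x = 2⁻ⁿ x` on `ℝ³ ∖ {0}` (iterates of the homothety `x ↦ x/2`). -/
noncomputable def homothetyAct (n : ℤ) (x : PuncturedR3) : PuncturedR3 :=
  ⟨(2 : ℝ) ^ (-n) • (x : EuclideanSpace ℝ (Fin 3)),
    smul_ne_zero (zpow_ne_zero _ two_ne_zero) x.2⟩

/-- The orbit relation of the action; the orbit space `V` is `Quot homothetyRel`. -/
def homothetyRel (x y : PuncturedR3) : Prop := ∃ n : ℤ, homothetyAct n x = y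

/-- The punctured coordinate plane `{(0, x₂, x₃) : (x₂, x₃) ≠ (0,0)} ⊆ ℝ³ ∖ {0}`
(the condition `(x₂, x₃) ≠ (0,0)` is automatic since points of `PuncturedR3` are nonzero). -/
def puncturedPlane : Set PuncturedR3 :=
  {x : PuncturedR3 | (x : EuclideanSpace ℝ (Fin 3)) 0 = 0}

/-! Sending `x` to its direction `x / ‖x‖` and to `log₂ ‖x‖ mod 1` is invariant under
the homothety and separates orbits, so it descends to a continuous injection of `V` into
`ℝ³ × ℝ/ℤ`; in particular `V` is Hausdorff. Writing points of the plane as `2ᵗ e^{2πia}`,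
the map `(a, t mod 1) ↦ [2ᵗ e^{2πia}]` from the torus onto the image of the plane becomes
`(a, b) ↦ (e^{2πia}, b)` after that injection, hence is injective; a continuous injection
of a compact space into a Hausdorff space is an embedding. -/

open Real

section PolarMod

variable {E : Type*} [NormedAddCommGroup E] [NormedSpace ℝ E]

noncomputable def polarMod (x : E) : E × AddCircle (1 : ℝ) :=
  (‖x‖⁻¹ • x, (logb 2 ‖x‖ : AddCircle (1 : ℝ)))

lemma rpow_logb_norm_smul_inv_norm_smul {x : E} (hx : x ≠ 0) :
    (2 : ℝ) ^ logb 2 ‖x‖ • ‖x‖⁻¹ • x = x := by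
  rw [rpow_logb two_pos (by norm_num) (norm_pos_iff.2 hx), smul_inv_smul₀ (norm_ne_zero_iff.2 hx)]

lemma polarMod_rpow_smul {u : E} (hu : ‖u‖ = 1) (t : ℝ) :
    polarMod ((2 : ℝ) ^ t • u) = (u, (t : AddCircle (1 : ℝ))) := by
  have h2t : ‖(2 : ℝ) ^ t • u‖ = (2 : ℝ) ^ t := by
    rw [norm_smul, hu, mul_one, norm_of_nonneg (rpow_nonneg zero_le_two t)]
  rw [polarMod, h2t, inv_smul_smul₀ (rpow_pos_of_pos two_pos t).ne',
    logb_rpow two_pos (by norm_num)]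

lemma norm_inv_norm_smul {x : E} (hx : x ≠ 0) : ‖‖x‖⁻¹ • x‖ = 1 := by
  rw [norm_smul, norm_inv, norm_norm, inv_mul_cancel₀ (norm_ne_zero_iff.2 hx)]

lemma polarMod_zpow_smul (n : ℤ) {x : E} (hx : x ≠ 0) :
    polarMod ((2 : ℝ) ^ n • x) = polarMod x := by
  conv_lhs => rw [← rpow_logb_norm_smul_inv_norm_smul hx, smul_smul, ← rpow_intCast,
    ← rpow_add two_pos]
  rw [polarMod_rpow_smul (norm_inv_norm_smul hx), polarMod, AddCircle.coe_add,
    (AddCircle.coe_eq_zero_iff 1).2 ⟨n, by simp⟩, zero_add]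

lemma exists_zpow_smul_eq_of_polarMod_eq {x y : E} (hx : x ≠ 0) (hy : y ≠ 0)
    (h : polarMod x = polarMod y) : ∃ n : ℤ, (2 : ℝ) ^ n • x = y := by
  obtain ⟨hdir : ‖x‖⁻¹ • x = ‖y‖⁻¹ • y, hlog⟩ := Prod.ext_iff.1 h
  obtain ⟨n, hn⟩ := AddSubgroup.mem_zmultiples_iff.1 (QuotientAddGroup.eq.1 hlog)
  refine ⟨n, ?_⟩
  rw [zsmul_eq_mul, mul_one] at hn
  rw [← rpow_logb_norm_smul_inv_norm_smul hx, ← rpow_logb_norm_smul_inv_norm_smul hy, hdir,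
    smul_smul, ← rpow_intCast, ← rpow_add two_pos, hn, neg_add_cancel_comm]

lemma continuous_polarMod_restrict :
    Continuous fun x : {x : E // x ≠ 0} => polarMod (x : E) := by
  have hnorm : Continuous fun x : {x : E // x ≠ 0} => ‖(x : E)‖ := continuous_subtype_val.norm
  have hne (x : {x : E // x ≠ 0}) : ‖(x : E)‖ ≠ 0 := norm_ne_zero_iff.2 x.2
  refine ((hnorm.inv₀ hne).smul continuous_subtype_val).prodMk ?_
  exact continuous_quotient_mk'.comp ((hnorm.log hne).div_const _)

end PolarMod

lemma coe_homothetyAct (n : ℤ) (x : PuncturedR3) :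
    (homothetyAct n x : EuclideanSpace ℝ (Fin 3)) =
      (2 : ℝ) ^ (-n) • (x : EuclideanSpace ℝ (Fin 3)) :=
  rfl

noncomputable def quotPolarMod :
    Quot homothetyRel → EuclideanSpace ℝ (Fin 3) × AddCircle (1 : ℝ) :=
  Quot.lift (fun x => polarMod (x : EuclideanSpace ℝ (Fin 3)))
    (by rintro x _ ⟨n, rfl⟩; exact (polarMod_zpow_smul (-n) x.2).symm)

lemma continuous_quotPolarMod : Continuous quotPolarMod :=
  continuous_quot_lift _ continuous_polarMod_restrict

lemma injective_quotPolarMod : Function.Injective quotPolarMod := by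
  rintro ⟨x⟩ ⟨y⟩ h
  obtain ⟨n, hn⟩ := exists_zpow_smul_eq_of_polarMod_eq x.2 y.2 h
  exact Quot.sound ⟨-n, Subtype.ext (by rw [coe_homothetyAct, neg_neg, hn])⟩

instance : T2Space (Quot homothetyRel) :=
  .of_injective_continuous injective_quotPolarMod continuous_quotPolarMod

noncomputable def planeEmbedding : ℂ →ₗᵢ[ℝ] EuclideanSpace ℝ (Fin 3) where
  toFun z := !₂[0, z.re, z.im]
  map_add' z w := by ext i; fin_cases i <;> simp
  map_smul' r z := by ext i; fin_cases i <;> simp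
  norm_map' z := by
    simp [EuclideanSpace.norm_eq, Fin.sum_univ_three, Complex.norm_def, Complex.normSq_apply, sq]

lemma planeEmbedding_apply_zero (z : ℂ) : planeEmbedding z 0 = 0 := rfl

lemma exists_planeEmbedding_eq {v : EuclideanSpace ℝ (Fin 3)} (hv : v 0 = 0) :
    ∃ z, planeEmbedding z = v :=
  ⟨⟨v 1, v 2⟩, by ext i; fin_cases i <;> simp [planeEmbedding, hv]⟩

lemma exists_circle_planeEmbedding_eq {v : EuclideanSpace ℝ (Fin 3)} (hv : v 0 = 0)
    (hv1 : ‖v‖ = 1) : ∃ c : Circle, planeEmbedding c = v := by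
  obtain ⟨z, rfl⟩ := exists_planeEmbedding_eq hv
  have hz : z ∈ Submonoid.unitSphere ℂ := by
    rwa [Submonoid.unitSphere, Submonoid.mem_mk, Subsemigroup.mem_mk, mem_sphere_zero_iff_norm,
      ← planeEmbedding.norm_map]
  exact ⟨⟨z, hz⟩, rfl⟩

lemma norm_planeEmbedding_circle (c : Circle) : ‖planeEmbedding c‖ = 1 := by
  rw [LinearIsometry.norm_map, Circle.norm_coe]

noncomputable def torusPoint (a : AddCircle (1 : ℝ)) (t : ℝ) : PuncturedR3 :=
  ⟨(2 : ℝ) ^ t • planeEmbedding (AddCircle.homeomorphCircle one_ne_zero a),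
    smul_ne_zero (rpow_pos_of_pos two_pos t).ne'
      (norm_ne_zero_iff.1 (by rw [norm_planeEmbedding_circle]; exact one_ne_zero))⟩

lemma polarMod_torusPoint (a : AddCircle (1 : ℝ)) (t : ℝ) :
    polarMod (torusPoint a t : EuclideanSpace ℝ (Fin 3)) =
      (planeEmbedding (AddCircle.homeomorphCircle one_ne_zero a), (t : AddCircle (1 : ℝ))) :=
  polarMod_rpow_smul (norm_planeEmbedding_circle _) t

noncomputable def torusParam (p : AddCircle (1 : ℝ) × AddCircle (1 : ℝ)) : Quot homothetyRel :=
  Quotient.liftOn' p.2 (fun t => Quot.mk _ (torusPoint p.1 t)) fun s t hst =>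
    injective_quotPolarMod <| by
      change polarMod _ = polarMod _
      rw [polarMod_torusPoint, polarMod_torusPoint]
      exact Prod.ext rfl (Quotient.sound' hst)

lemma quotPolarMod_torusParam (p : AddCircle (1 : ℝ) × AddCircle (1 : ℝ)) :
    quotPolarMod (torusParam p) =
      (planeEmbedding (AddCircle.homeomorphCircle one_ne_zero p.1), p.2) := by
  obtain ⟨a, b⟩ := p
  induction b using QuotientAddGroup.induction_on
  exact polarMod_torusPoint a _

lemma injective_torusParam : Function.Injective torusParam := by
  intro p q h
  have hpq := congrArg quotPolarMod h
  rw [quotPolarMod_torusParam, quotPolarMod_torusParam, Prod.ext_iff] at hpq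
  exact Prod.ext ((AddCircle.homeomorphCircle one_ne_zero).injective
    (Circle.ext (planeEmbedding.injective hpq.1))) hpq.2

lemma continuous_torusParam : Continuous torusParam := by
  rw [(IsOpenQuotientMap.id.prodMap
    QuotientAddGroup.isOpenQuotientMap_mk).isQuotientMap.continuous_iff]
  refine continuous_quot_mk.comp (Continuous.subtype_mk ?_ _)
  exact ((continuous_const.rpow continuous_snd fun _ => Or.inl two_ne_zero).smul
    (planeEmbedding.continuous.comp (continuous_subtype_val.comp
      ((AddCircle.homeomorphCircle one_ne_zero).continuous.comp continuous_fst))))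

lemma range_torusParam : Set.range torusParam = Quot.mk homothetyRel '' puncturedPlane := by
  refine Set.Subset.antisymm ?_ ?_
  · rintro _ ⟨⟨a, b⟩, rfl⟩
    induction b using QuotientAddGroup.induction_on with | H t => ?_
    refine ⟨torusPoint a t, ?_, rfl⟩
    simp [puncturedPlane, torusPoint, planeEmbedding_apply_zero]
  · rintro _ ⟨x, hx, rfl⟩
    have hdir0 : (‖x.1‖⁻¹ • x.1) 0 = 0 := by simp [show x.1 0 = 0 from hx]
    obtain ⟨c, hc⟩ := exists_circle_planeEmbedding_eq hdir0 (norm_inv_norm_smul x.2)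
    refine ⟨((AddCircle.homeomorphCircle one_ne_zero).symm c, logb 2 ‖x.1‖),
      injective_quotPolarMod ?_⟩
    rw [quotPolarMod_torusParam, Homeomorph.apply_symm_apply]
    exact Prod.ext hc rfl

/-- The image under the quotient map of the punctured coordinate plane
`{(0, x₂, x₃) : (x₂, x₃) ≠ (0,0)}`, with the subspace topology in `V`, is homeomorphic
to the 2-torus `(ℝ/ℤ) × (ℝ/ℤ)` (the trivial torus `λ̂₀` in `V ≅ S² × S¹`). -/
theorem image_of_punctured_plane_homeomorphic_to_torus :
    Nonempty ((Quot.mk homothetyRel '' puncturedPlane) ≃ₜ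
      (AddCircle (1 : ℝ) × AddCircle (1 : ℝ))) :=
  ⟨(Homeomorph.setCongr range_torusParam).symm.trans
    (continuous_torusParam.isClosedEmbedding injective_torusParam).isEmbedding.toHomeomorph.symm⟩
end
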